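/- arXiv:1707.01255 — 2 statements merged into one kernel-verified Lean document; each statement's English description precedes it below -/
import Mathlib

section
/- Let p : ℝ² → ℝ⁴ have polynomial components of total degree at most n, and let D = (d_{j,k}) satisfy B_j^m(p(s,t)) = Σ_{|k|=mn} d_{j,k} B_k^{mn}(s,t) for all (s,t) ∈ ℝ² and all |j| = m. Then there exists a coefficient vector b with Euclidean norm ‖b‖ = 1 such that for every b' with ‖b'‖ = 1, sup_{(s,t)∈Ω} |q_b(p(s,t))| ≤ ‖D b'‖, where q_b(u) = Σ_{|j|=m} b_j B_j^m(u). In other words, the vector corresponding to the smallest singular value of D yields an approximate implicitization whose maximal algebraic error on Ω is at most σ_min(D). -/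
/-!
Choose `b` minimising `b' ↦ ‖D b'‖` over the unit sphere; the sphere is compact and the
objective continuous. Substituting the defining relation of `D` writes `q_b ∘ p` in the
triangular Bernstein basis with coefficient vector `D b`. On `Ω` the triangular Bernstein
polynomials are nonnegative and sum to one, so `|q_b (p x)|` is a convex combination of the
`|(D b)_k|`, hence at most `max_k |(D b)_k| ≤ ‖D b‖ ≤ ‖D b'‖`.
-/

open MeasureTheory Finset

/-- The multinomial coefficient `n! / ∏ l, (i l)!` as a real number. -/
noncomputable def mcoef {L : ℕ} (n : ℕ) (i : Fin L → ℕ) : ℝ :=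
  (n.factorial : ℝ) / ∏ l, ((i l).factorial : ℝ)

/-- The Bernstein basis polynomial of degree `n` for the multi-index `i`,
as a function of barycentric coordinates `β : Fin L → ℝ`. -/
noncomputable def bern {L : ℕ} (n : ℕ) (i : Fin L → ℕ) (β : Fin L → ℝ) : ℝ :=
  mcoef n i * ∏ l, β l ^ i l

/-- The triangular Bernstein basis polynomial of degree `n` for a multi-index
`i : Fin 3 → ℕ`, as a function on `ℝ²`. -/
noncomputable def triBern (n : ℕ) (i : Fin 3 → ℕ) (x : ℝ × ℝ) : ℝ :=
  mcoef n i * (x.1 ^ i 0 * x.2 ^ i 1 * (1 - x.1 - x.2) ^ i 2)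

/-- The tetrahedral Bernstein basis polynomial of degree `m` for a multi-index
`j : Fin 4 → ℕ`, as a function on `ℝ⁴`. -/
noncomputable def tetBern (m : ℕ) (j : Fin 4 → ℕ) (u : Fin 4 → ℝ) : ℝ :=
  mcoef m j * ∏ l, u l ^ j l

/-- The standard triangle `Ω = {(s,t) : 0 ≤ s, 0 ≤ t, s + t ≤ 1}` in `ℝ²`. -/
def Omega : Set (ℝ × ℝ) := {x | 0 ≤ x.1 ∧ 0 ≤ x.2 ∧ x.1 + x.2 ≤ 1}

/-- `p : ℝ² → ℝ⁴` has components that are real polynomials in `(s,t)` of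
total degree at most `n`. -/
def PolyComponents (n : ℕ) (p : ℝ × ℝ → Fin 4 → ℝ) : Prop :=
  ∀ l : Fin 4, ∃ P : MvPolynomial (Fin 2) ℝ, P.totalDegree ≤ n ∧
    ∀ x : ℝ × ℝ, p x l = MvPolynomial.eval ![x.1, x.2] P

lemma mcoef_eq_multinomial {L N : ℕ} (k : Fin L → ℕ) (hk : ∑ l, k l = N) :
    mcoef N k = (Nat.multinomial univ k : ℝ) := by
  have hspec := Nat.multinomial_spec univ k
  rw [hk] at hspec
  rw [mcoef, div_eq_iff (by positivity), ← hspec]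
  push_cast
  ring

lemma sum_triBern (N : ℕ) (x : ℝ × ℝ) :
    ∑ k ∈ Nat.antidiagonalTuple 3 N, triBern N k x = 1 := by
  have multinomial := sum_pow_eq_sum_piAntidiag (univ : Finset (Fin 3))
    ![x.1, x.2, 1 - x.1 - x.2] N
  have hsum : ∑ i, ![x.1, x.2, 1 - x.1 - x.2] i = 1 := by
    simp only [Fin.sum_univ_three, Fin.isValue, Matrix.cons_val_zero, Matrix.cons_val_one,
      Matrix.cons_val_two, Matrix.tail_cons, Matrix.head_cons]
    ring
  rw [piAntidiag_univ_fin_eq_antidiagonalTuple, hsum, one_pow] at multinomial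
  rw [multinomial]
  refine sum_congr rfl fun k hk => ?_
  rw [Nat.mem_antidiagonalTuple] at hk
  simp [triBern, mcoef_eq_multinomial k hk, Fin.prod_univ_three]

lemma triBern_nonneg (N : ℕ) (k : Fin 3 → ℕ) {x : ℝ × ℝ} (hx : x ∈ Omega) :
    0 ≤ triBern N k x := by
  obtain ⟨hs, ht, hst⟩ := hx
  have hr : 0 ≤ 1 - x.1 - x.2 := by linarith
  unfold triBern mcoef
  positivity

lemma abs_sum_mul_le_sqrt_sum_sq_of_weights {ι : Type*} (s : Finset ι) (c w : ι → ℝ)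
    (hw₀ : ∀ i ∈ s, 0 ≤ w i) (hw₁ : ∑ i ∈ s, w i = 1) :
    |∑ i ∈ s, c i * w i| ≤ √(∑ i ∈ s, c i ^ 2) := by
  set M := √(∑ i ∈ s, c i ^ 2)
  have hc : ∀ i ∈ s, |c i| ≤ M := fun i hi => by
    rw [← Real.sqrt_sq_eq_abs]
    exact Real.sqrt_le_sqrt (single_le_sum (fun j _ => sq_nonneg (c j)) hi)
  calc |∑ i ∈ s, c i * w i|
      ≤ ∑ i ∈ s, |c i| * w i := by
        refine (abs_sum_le_sum_abs _ _).trans_eq (sum_congr rfl fun i hi => ?_)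
        rw [abs_mul, abs_of_nonneg (hw₀ i hi)]
    _ ≤ ∑ i ∈ s, M * w i := sum_le_sum fun i hi => by gcongr; exacts [hw₀ i hi, hc i hi]
    _ = M := by rw [← mul_sum, hw₁, mul_one]

lemma abs_sum_mul_triBern_le (N : ℕ) (c : (Fin 3 → ℕ) → ℝ) {x : ℝ × ℝ} (hx : x ∈ Omega) :
    |∑ k ∈ Nat.antidiagonalTuple 3 N, c k * triBern N k x| ≤
      √(∑ k ∈ Nat.antidiagonalTuple 3 N, c k ^ 2) :=
  abs_sum_mul_le_sqrt_sum_sq_of_weights _ c _ (fun k _ => triBern_nonneg N k hx)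
    (sum_triBern N x)

lemma exists_isMinOn_unit_sphere {α : Type*} (A : Finset α) (hA : A.Nonempty)
    (F : (α → ℝ) → ℝ) (hF : Continuous F)
    (hFA : ∀ b b' : α → ℝ, (∀ j ∈ A, b j = b' j) → F b = F b') :
    ∃ b : α → ℝ, ∑ j ∈ A, b j ^ 2 = 1 ∧
      ∀ b' : α → ℝ, ∑ j ∈ A, b' j ^ 2 = 1 → F b ≤ F b' := by
  classical
  set S : Set (α → ℝ) := {b | ∑ j ∈ A, b j ^ 2 = 1} ∩ ⋂ j ∈ (A : Set α)ᶜ, {b | b j = 0}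
  have hS_closed : IsClosed S :=
    (isClosed_eq (by fun_prop) continuous_const).inter
      (isClosed_biInter fun j _ => isClosed_eq (continuous_apply j) continuous_const)
  have hS_bounded : S ⊆ Set.univ.pi fun _ => Set.Icc (-1) 1 := by
    intro b ⟨hb, hb₀⟩ j _
    rw [Set.mem_Icc, ← abs_le, ← sq_le_one_iff_abs_le_one]
    by_cases hj : j ∈ A
    · exact hb ▸ single_le_sum (fun i _ => sq_nonneg (b i)) hj
    · have hbj : b j = 0 := Set.mem_iInter₂.mp hb₀ j hj
      simp [hbj]
  have hS_compact : IsCompact S :=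
    (isCompact_univ_pi fun _ => isCompact_Icc).of_isClosed_subset hS_closed hS_bounded
  set restrict : (α → ℝ) → α → ℝ := fun b j => if j ∈ A then b j else 0
  have restrict_mem : ∀ b, ∑ j ∈ A, b j ^ 2 = 1 → restrict b ∈ S := fun b hb =>
    ⟨(sum_congr rfl fun j hj => by simp [restrict, hj]).trans hb,
      Set.mem_iInter₂.mpr fun j hj => by simp [restrict, show j ∉ A from hj]⟩
  obtain ⟨j₀, hj₀⟩ := hA
  have hS_nonempty : S.Nonempty :=
    ⟨restrict (Pi.single j₀ 1), restrict_mem _ (by rw [sum_eq_single j₀] <;> simp_all)⟩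
  obtain ⟨b, hbS, hb_min⟩ := hS_compact.exists_isMinOn hS_nonempty hF.continuousOn
  refine ⟨b, hbS.1, fun b' hb' => ?_⟩
  calc F b ≤ F (restrict b') := hb_min (restrict_mem b' hb')
    _ = F b' := hFA _ _ fun j hj => by simp [restrict, hj]

lemma antidiagonalTuple_nonempty (L N : ℕ) : (Nat.antidiagonalTuple (L + 1) N).Nonempty :=
  ⟨Pi.single 0 N, by simp [Nat.mem_antidiagonalTuple]⟩

theorem exists_best_candidate_general (n m : ℕ) (p : ℝ × ℝ → Fin 4 → ℝ)
    (d : (Fin 4 → ℕ) → (Fin 3 → ℕ) → ℝ)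
    (hD : ∀ j ∈ Finset.Nat.antidiagonalTuple 4 m, ∀ x : ℝ × ℝ,
      tetBern m j (p x) =
        ∑ k ∈ Finset.Nat.antidiagonalTuple 3 (m * n), d j k * triBern (m * n) k x) :
    ∃ b : (Fin 4 → ℕ) → ℝ,
      Real.sqrt (∑ j ∈ Finset.Nat.antidiagonalTuple 4 m, (b j) ^ 2) = 1 ∧
      ∀ b' : (Fin 4 → ℕ) → ℝ,
        Real.sqrt (∑ j ∈ Finset.Nat.antidiagonalTuple 4 m, (b' j) ^ 2) = 1 →
        ∀ x ∈ Omega,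
          |∑ j ∈ Finset.Nat.antidiagonalTuple 4 m, b j * tetBern m j (p x)| ≤
            Real.sqrt (∑ k ∈ Finset.Nat.antidiagonalTuple 3 (m * n),
              (∑ j ∈ Finset.Nat.antidiagonalTuple 4 m, d j k * b' j) ^ 2) := by
  set A := Nat.antidiagonalTuple 4 m
  set K := Nat.antidiagonalTuple 3 (m * n)
  obtain ⟨b, hb, hb_min⟩ := exists_isMinOn_unit_sphere A (antidiagonalTuple_nonempty 3 m)
    (fun b => √(∑ k ∈ K, (∑ j ∈ A, d j k * b j) ^ 2)) (by fun_prop)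
    fun b b' h => by
      congr 1
      refine sum_congr rfl fun k _ => congrArg (· ^ 2) (sum_congr rfl fun j hj => ?_)
      rw [h j hj]
  refine ⟨b, by rw [hb, Real.sqrt_one], fun b' hb' x hx => ?_⟩
  have q_eq : ∑ j ∈ A, b j * tetBern m j (p x) =
      ∑ k ∈ K, (∑ j ∈ A, d j k * b j) * triBern (m * n) k x := by
    simp_rw [sum_mul, mul_comm (d _ _) (b _), mul_assoc]
    rw [sum_comm]
    exact sum_congr rfl fun j hj => by rw [hD j hj x, mul_sum]
  calc |∑ j ∈ A, b j * tetBern m j (p x)|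
      ≤ √(∑ k ∈ K, (∑ j ∈ A, d j k * b j) ^ 2) := q_eq ▸ abs_sum_mul_triBern_le _ _ hx
    _ ≤ _ := hb_min b' (Real.sqrt_eq_one.mp hb')

/-- there is a unit coefficient vector `b` (the one corresponding
to the smallest singular value of `D`) whose maximal algebraic error on `Ω` is
at most `‖D b'‖` for every unit vector `b'`, i.e. at most `σ_min(D)`. -/
theorem exists_best_candidate (n m : ℕ) (p : ℝ × ℝ → Fin 4 → ℝ)
    (hp : PolyComponents n p) (d : (Fin 4 → ℕ) → (Fin 3 → ℕ) → ℝ)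
    (hD : ∀ j ∈ Finset.Nat.antidiagonalTuple 4 m, ∀ x : ℝ × ℝ,
      tetBern m j (p x) =
        ∑ k ∈ Finset.Nat.antidiagonalTuple 3 (m * n), d j k * triBern (m * n) k x) :
    ∃ b : (Fin 4 → ℕ) → ℝ,
      Real.sqrt (∑ j ∈ Finset.Nat.antidiagonalTuple 4 m, (b j) ^ 2) = 1 ∧
      ∀ b' : (Fin 4 → ℕ) → ℝ,
        Real.sqrt (∑ j ∈ Finset.Nat.antidiagonalTuple 4 m, (b' j) ^ 2) = 1 →
        ∀ x ∈ Omega,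
          |∑ j ∈ Finset.Nat.antidiagonalTuple 4 m, b j * tetBern m j (p x)| ≤
            Real.sqrt (∑ k ∈ Finset.Nat.antidiagonalTuple 3 (m * n),
              (∑ j ∈ Finset.Nat.antidiagonalTuple 4 m, d j k * b' j) ^ 2) :=
  exists_best_candidate_general n m p d hD
end

section
/- Let p : ℝ² → ℝ⁴ have polynomial components of total degree at most n, and let D = (d_{j,k}) satisfy B_j^m(p(s,t)) = Σ_{|k|=mn} d_{j,k} B_k^{mn}(s,t) for all (s,t) ∈ ℝ² and all |j| = m. Then for a coefficient vector b, the polynomial q_b(u) = Σ_{|j|=m} b_j B_j^m(u) satisfies q_b(p(s,t)) = 0 for all (s,t) ∈ Ω if and only if D b = 0, i.e. exact implicitizations correspond exactly to the kernel of D. -/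
open MeasureTheory Finset

/-!
Substituting the defining relation of `D` into `q_b ∘ p` gives
`q_b (p x) = ∑_k (D b)_k B_k^{mn}(x)`, so the claim is that the triangular Bernstein polynomials
of degree `N = mn` are linearly independent as functions on `Ω`. Through `(s, t) ↦ (s, t, 1 - s - t)`
they are the Bernstein polynomials in barycentric coordinates on the standard simplex. A combination
of those is the evaluation of a homogeneous polynomial of degree `N` with coefficients
`c_k · N!/k!`; vanishing on the simplex, it vanishes on the open positive orthant by homogeneity,
hence is the zero polynomial, and all `c_k` vanish.
-/

lemma mcoef_ne_zero {L : ℕ} (n : ℕ) (i : Fin L → ℕ) : mcoef n i ≠ 0 := by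
  unfold mcoef
  refine div_ne_zero (by exact_mod_cast n.factorial_ne_zero) ?_
  exact prod_ne_zero_iff.mpr fun l _ => by exact_mod_cast (i l).factorial_ne_zero

lemma bern_smul {L N : ℕ} {k : Fin L → ℕ} (hk : k ∈ Nat.antidiagonalTuple L N)
    (σ : ℝ) (y : Fin L → ℝ) : bern N k (σ • y) = σ ^ N * bern N k y := by
  rw [Nat.mem_antidiagonalTuple] at hk
  simp only [bern, Pi.smul_apply, smul_eq_mul, mul_pow, prod_mul_distrib, prod_pow_eq_pow_sum, hk]
  ring

noncomputable def bernPoly (L N : ℕ) (c : (Fin L → ℕ) → ℝ) : MvPolynomial (Fin L) ℝ :=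
  ∑ k ∈ Nat.antidiagonalTuple L N,
    MvPolynomial.monomial (Finsupp.equivFunOnFinite.symm k) (c k * mcoef N k)

lemma eval_bernPoly (L N : ℕ) (c : (Fin L → ℕ) → ℝ) (y : Fin L → ℝ) :
    MvPolynomial.eval y (bernPoly L N c) = ∑ k ∈ Nat.antidiagonalTuple L N, c k * bern N k y := by
  simp only [bernPoly, map_sum, MvPolynomial.eval_monomial, bern]
  refine sum_congr rfl fun k _ => ?_
  rw [Finsupp.prod_fintype _ _ fun _ => pow_zero _, mul_assoc]
  rfl

lemma eval_smul_bernPoly (L N : ℕ) (c : (Fin L → ℕ) → ℝ) (σ : ℝ) (y : Fin L → ℝ) :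
    MvPolynomial.eval (σ • y) (bernPoly L N c) = σ ^ N * MvPolynomial.eval y (bernPoly L N c) := by
  rw [eval_bernPoly, eval_bernPoly, mul_sum]
  exact sum_congr rfl fun k hk => by rw [bern_smul hk]; ring

lemma coeff_bernPoly {L N : ℕ} (c : (Fin L → ℕ) → ℝ) {k : Fin L → ℕ}
    (hk : k ∈ Nat.antidiagonalTuple L N) :
    (bernPoly L N c).coeff (Finsupp.equivFunOnFinite.symm k) = c k * mcoef N k := by
  rw [bernPoly, MvPolynomial.coeff_sum, sum_eq_single k]
  · rw [MvPolynomial.coeff_monomial, if_pos rfl]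
  · intro k' _ hne
    rw [MvPolynomial.coeff_monomial, if_neg (Finsupp.equivFunOnFinite.symm.injective.ne hne)]
  · exact fun hk' => absurd hk hk'

lemma eq_zero_of_sum_bern_eq_zero_on_stdSimplex {L N : ℕ} [NeZero L] (c : (Fin L → ℕ) → ℝ)
    (h : ∀ y ∈ stdSimplex ℝ (Fin L), ∑ k ∈ Nat.antidiagonalTuple L N, c k * bern N k y = 0) :
    ∀ k ∈ Nat.antidiagonalTuple L N, c k = 0 := by
  have hvanish : ∀ y ∈ Set.pi Set.univ fun _ => Set.Ioi (0 : ℝ),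
      MvPolynomial.eval y (bernPoly L N c) = MvPolynomial.eval y 0 := by
    intro y hy
    have hpos : ∀ l, 0 < y l := fun l => hy l (Set.mem_univ l)
    set σ := ∑ l, y l
    have hσ : 0 < σ := sum_pos (fun l _ => hpos l) ⟨0, mem_univ _⟩
    have hy : y = σ • σ⁻¹ • y := by rw [smul_smul, mul_inv_cancel₀ hσ.ne', one_smul]
    have hsimplex : σ⁻¹ • y ∈ stdSimplex ℝ (Fin L) :=
      ⟨fun l => by simpa using mul_nonneg (inv_nonneg.mpr hσ.le) (hpos l).le, by
        simp [← mul_sum, σ, inv_mul_cancel₀ hσ.ne']⟩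
    rw [map_zero, hy, eval_smul_bernPoly, eval_bernPoly, h _ hsimplex, mul_zero]
  have hpoly := MvPolynomial.funext_set _ (fun _ => Set.Ioi_infinite 0) hvanish
  intro k hk
  have := coeff_bernPoly c hk
  rw [hpoly, MvPolynomial.coeff_zero, eq_comm, mul_eq_zero] at this
  exact this.resolve_right (mcoef_ne_zero N k)

lemma triBern_eq_bern (N : ℕ) (k : Fin 3 → ℕ) (x : ℝ × ℝ) :
    triBern N k x = bern N k ![x.1, x.2, 1 - x.1 - x.2] := by
  simp [triBern, bern, Fin.prod_univ_three]

lemma image_Omega_eq_stdSimplex :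
    (fun x : ℝ × ℝ => ![x.1, x.2, 1 - x.1 - x.2]) '' Omega = stdSimplex ℝ (Fin 3) := by
  ext y
  constructor
  · rintro ⟨x, ⟨hs, ht, hst⟩, rfl⟩
    refine ⟨fun l => ?_, ?_⟩
    · fin_cases l <;> simp <;> linarith
    · simp [Fin.sum_univ_three]
  · rintro ⟨hnonneg, hsum⟩
    rw [Fin.sum_univ_three] at hsum
    refine ⟨(y 0, y 1), ⟨hnonneg 0, hnonneg 1, by linarith [hnonneg 2]⟩, ?_⟩
    have hy2 : 1 - y 0 - y 1 = y 2 := by linarith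
    ext l
    fin_cases l <;> simp [hy2]

lemma sum_mul_eq_sum_transpose_mul {R ι κ : Type*} [CommSemiring R] {s : Finset ι}
    {t : Finset κ} {f : ι → R} {g : κ → R} {d : ι → κ → R}
    (hf : ∀ j ∈ s, f j = ∑ k ∈ t, d j k * g k) (b : ι → R) :
    ∑ j ∈ s, b j * f j = ∑ k ∈ t, (∑ j ∈ s, d j k * b j) * g k := by
  simp only [sum_mul]
  rw [sum_comm]
  refine sum_congr rfl fun j hj => ?_
  rw [hf j hj, mul_sum]
  exact sum_congr rfl fun k _ => by ring

theorem exact_iff_kernel_general (n m : ℕ) (p : ℝ × ℝ → Fin 4 → ℝ)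
    (d : (Fin 4 → ℕ) → (Fin 3 → ℕ) → ℝ)
    (hD : ∀ j ∈ Finset.Nat.antidiagonalTuple 4 m, ∀ x : ℝ × ℝ,
      tetBern m j (p x) =
        ∑ k ∈ Finset.Nat.antidiagonalTuple 3 (m * n), d j k * triBern (m * n) k x)
    (b : (Fin 4 → ℕ) → ℝ) :
    (∀ x ∈ Omega, ∑ j ∈ Finset.Nat.antidiagonalTuple 4 m, b j * tetBern m j (p x) = 0) ↔
      ∀ k ∈ Finset.Nat.antidiagonalTuple 3 (m * n),
        ∑ j ∈ Finset.Nat.antidiagonalTuple 4 m, d j k * b j = 0 := by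
  simp only [sum_mul_eq_sum_transpose_mul (fun j hj => hD j hj _) b]
  constructor
  · intro h
    refine eq_zero_of_sum_bern_eq_zero_on_stdSimplex _ ?_
    rw [← image_Omega_eq_stdSimplex]
    rintro _ ⟨x, hx, rfl⟩
    simpa only [triBern_eq_bern] using h x hx
  · intro h x _
    exact sum_eq_zero fun k hk => by rw [h k hk, zero_mul]

/-- `q_b ∘ p` vanishes on `Ω` iff `b` lies in the kernel of `D`. -/
theorem exact_iff_kernel (n m : ℕ) (p : ℝ × ℝ → Fin 4 → ℝ)
    (hp : PolyComponents n p) (d : (Fin 4 → ℕ) → (Fin 3 → ℕ) → ℝ)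
    (hD : ∀ j ∈ Finset.Nat.antidiagonalTuple 4 m, ∀ x : ℝ × ℝ,
      tetBern m j (p x) =
        ∑ k ∈ Finset.Nat.antidiagonalTuple 3 (m * n), d j k * triBern (m * n) k x)
    (b : (Fin 4 → ℕ) → ℝ) :
    (∀ x ∈ Omega, ∑ j ∈ Finset.Nat.antidiagonalTuple 4 m, b j * tetBern m j (p x) = 0) ↔
      ∀ k ∈ Finset.Nat.antidiagonalTuple 3 (m * n),
        ∑ j ∈ Finset.Nat.antidiagonalTuple 4 m, d j k * b j = 0 :=
  exact_iff_kernel_general n m p d hD b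
end
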